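/- arXiv:1908.06200 — 2 statements merged into one kernel-verified Lean document; each statement's English description precedes it below -/
import Mathlib

section
/- Let X be a continuum and p ∈ X. Then p is a cut point of X (i.e., X \ {p} is disconnected) if and only if C_p^X is a cut point of HS(p,X) (i.e., HS(p,X) \ {C_p^X} is disconnected). -/
open TopologicalSpace Set

/-- The hyperspace of subcontinua of `X`. -/
abbrev Hyp (X : Type*) [MetricSpace X] : Type _ :=
  {A : NonemptyCompacts X // IsConnected (A : Set X)}

variable {X : Type*} [MetricSpace X]

/-- `C(p,X)`, the subcontinua containing `p`, as a subset of `Hyp X`. -/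
def CpSet (p : X) : Set (Hyp X) := {A | p ∈ (A.1 : Set X)}

/-- The setoid collapsing `C(p,X)` to a point. -/
def hsSetoid (p : X) : Setoid (Hyp X) where
  r A B := A = B ∨ (A ∈ CpSet p ∧ B ∈ CpSet p)
  iseqv := by
    constructor
    · intro A; exact Or.inl rfl
    · rintro A B (rfl | h); exacts [Or.inl rfl, Or.inr ⟨h.2, h.1⟩]
    · rintro A B C (rfl | h) (rfl | h')
      exacts [Or.inl rfl, Or.inr h', Or.inr h, Or.inr ⟨h.1, h'.2⟩]

/-- The hyperspace `HS(p,X) = C(X)/C(p,X)`. -/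
abbrev HS (p : X) : Type _ := Quotient (hsSetoid p)

/-- The quotient map `π_p^X`. -/
def hsMk (p : X) : Hyp X → HS p := Quotient.mk (hsSetoid p)

/-- The singleton `{p}` as a subcontinuum. -/
def singHyp (p : X) : Hyp X :=
  ⟨⟨⟨{p}, isCompact_singleton⟩, Set.singleton_nonempty p⟩, isConnected_singleton⟩

/-- The distinguished point `C_p^X` of `HS(p,X)`. -/
def CpPoint (p : X) : HS p := hsMk p (singHyp p)

/-!
Since `C(p,X)` is closed, the quotient map restricts to a homeomorphism from the subcontinua
missing `p` onto `HS(p,X) \ {C_p^X}`, so it suffices to show that this family is connected iff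
`X \ {p}` is. Its union is `X \ {p}`, and a connected family of connected sets has connected
union. Conversely, every subcontinuum `A` missing `p` is linked inside the connected hyperspace
`C(A)` to the singletons of its points, which form a connected copy of `X \ {p}`.
-/

open Metric Topology

theorem exists_isClopen_mem_disjoint_of_disjoint_connectedComponent {Y : Type*}
    [TopologicalSpace Y] [T2Space Y] [CompactSpace Y] {x : Y} {K : Set Y} (hK : IsClosed K)
    (h : Disjoint (connectedComponent x) K) : ∃ D, IsClopen D ∧ x ∈ D ∧ Disjoint D K := by
  rw [connectedComponent_eq_iInter_isClopen] at h
  obtain ⟨u, hu⟩ := hK.isCompact.elim_finite_subfamily_closed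
    (fun s : {s : Set Y // IsClopen s ∧ x ∈ s} => (s : Set Y)) (fun s => s.2.1.1)
    (disjoint_iff_inter_eq_empty.mp h.symm)
  exact ⟨⋂ s ∈ u, (s : Set Y), isClopen_biInter_finset fun s _ => s.2.1,
    mem_iInter₂.mpr fun s _ => s.2.2, (disjoint_iff_inter_eq_empty.mpr hu).symm⟩

/-- Boundary bumping. -/
theorem IsClosed.connectedComponentIn_not_subset_interior {Y : Type*} [TopologicalSpace Y]
    [T2Space Y] [CompactSpace Y] [PreconnectedSpace Y] {E : Set Y} (hE : IsClosed E)
    (hE' : E ≠ univ) {x : Y} (hx : x ∈ E) : ¬ connectedComponentIn E x ⊆ interior E := by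
  intro hsub
  have : CompactSpace E := isCompact_iff_compactSpace.mp hE.isCompact
  obtain ⟨D, hD, hxD, hDK⟩ := exists_isClopen_mem_disjoint_of_disjoint_connectedComponent
    (x := (⟨x, hx⟩ : E)) (isOpen_interior.isClosed_compl.preimage continuous_subtype_val)
    (disjoint_left.mpr fun y hy hyK =>
      hyK (hsub (connectedComponentIn_eq_image hx ▸ mem_image_of_mem _ hy)))
  obtain ⟨O, hO, hOD⟩ := isOpen_induced_iff.mp hD.2
  have hD_eq : Subtype.val '' D = O ∩ interior E := by
    ext y
    constructor
    · rintro ⟨y, hy, rfl⟩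
      exact ⟨(hOD.symm ▸ hy : y ∈ Subtype.val ⁻¹' O), not_not.mp (disjoint_left.mp hDK hy)⟩
    · rintro ⟨hyO, hyE⟩
      exact ⟨⟨y, interior_subset hyE⟩, hOD ▸ hyO, rfl⟩
  rcases isClopen_iff.mp ⟨(hD.1.isCompact.image continuous_subtype_val).isClosed,
      hD_eq ▸ hO.inter isOpen_interior⟩ with h | h
  · exact (h ▸ mem_image_of_mem Subtype.val hxD : x ∈ (∅ : Set Y))
  · exact hE' (eq_univ_of_univ_subset (h ▸ image_subset_iff.mpr fun y _ => y.2))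

theorem Topology.IsQuotientMap.isPreconnected_preimage_iff {α β : Type*} [TopologicalSpace α]
    [TopologicalSpace β] {f : α → β} (hf : IsQuotientMap f) {s : Set β} (hs : IsOpen s)
    (hinj : InjOn f (f ⁻¹' s)) : IsPreconnected (f ⁻¹' s) ↔ IsPreconnected s := by
  let e := (isHomeomorph_iff_isQuotientMap_injective.mpr ⟨hf.restrictPreimage_isOpen hs,
    fun x y hxy => Subtype.ext (hinj x.2 y.2 (congrArg Subtype.val hxy))⟩).homeomorph
  simp only [isPreconnected_iff_preconnectedSpace]
  exact ⟨fun _ => e.surjective.denseRange.preconnectedSpace e.continuous,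
    fun _ => e.symm.surjective.denseRange.preconnectedSpace e.symm.continuous⟩

theorem exists_isPreconnected_ssuperset_hausdorffDist_le {α : Type*} [MetricSpace α]
    {B M : Set α} (hB : IsCompact B) (hBc : IsPreconnected B) (hMc : IsPreconnected M)
    (hMne : M.Nonempty) (hMB : M ⊆ B) {δ : ℝ} (hδ : 0 < δ) (hb : ∃ b ∈ B, δ < infDist b M) :
    ∃ C, IsCompact C ∧ IsPreconnected C ∧ M ⊂ C ∧ C ⊆ B ∧ hausdorffDist C M ≤ δ := by
  have : CompactSpace B := isCompact_iff_compactSpace.mp hB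
  have : PreconnectedSpace B := Subtype.preconnectedSpace hBc
  set d : B → ℝ := fun y => infDist (y : α) M
  have hd : Continuous d := (continuous_infDist_pt M).comp continuous_subtype_val
  set E : Set B := d ⁻¹' Iic δ
  have hEcl : IsClosed E := isClosed_Iic.preimage hd
  have hE : E ≠ univ := by
    obtain ⟨b, hbB, hbδ⟩ := hb
    exact fun h => (h ▸ mem_univ (⟨b, hbB⟩ : B) : (⟨b, hbB⟩ : B) ∈ E).not_gt hbδ
  have hME : Subtype.val ⁻¹' M ⊆ E := fun y hy =>
    (infDist_zero_of_mem (s := M) hy).trans_le hδ.le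
  obtain ⟨a, ha⟩ := hMne
  have ha' : (⟨a, hMB ha⟩ : B) ∈ E := hME ha
  set K := connectedComponentIn E ⟨a, hMB ha⟩ with hK
  have hMK : Subtype.val ⁻¹' M ⊆ K := by
    refine IsPreconnected.subset_connectedComponentIn ?_ ha hME
    rwa [← Topology.IsInducing.subtypeVal.isPreconnected_image, Subtype.image_preimage_coe,
      inter_eq_right.mpr hMB]
  obtain ⟨y, hyK, hy⟩ := not_subset.mp
    (hEcl.connectedComponentIn_not_subset_interior hE ha')
  have hδy : δ ≤ d y := not_lt.mp fun h =>
    hy (interior_maximal (fun z hz => le_of_lt hz) (isOpen_lt hd continuous_const) h)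
  have hKcpt : IsCompact K := by
    have : CompactSpace E := isCompact_iff_compactSpace.mp hEcl.isCompact
    rw [hK, connectedComponentIn_eq_image ha']
    exact isClosed_connectedComponent.isCompact.image continuous_subtype_val
  have hMC : M ⊆ Subtype.val '' K := fun m hm => ⟨⟨m, hMB hm⟩, hMK hm, rfl⟩
  refine ⟨Subtype.val '' K, hKcpt.image continuous_subtype_val,
    isPreconnected_connectedComponentIn.image _ continuous_subtype_val.continuousOn,
    (ssubset_iff_of_subset hMC).mpr ⟨y, ⟨y, hyK, rfl⟩, ?_⟩,
    image_subset_iff.mpr fun z _ => z.2, ?_⟩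
  · intro hyM
    exact hδ.not_ge (hδy.trans_eq (infDist_zero_of_mem hyM))
  · refine hausdorffDist_le_of_infDist hδ.le ?_ fun x hx => ?_
    · rintro _ ⟨z, hz, rfl⟩
      exact connectedComponentIn_subset E _ hz
    · exact (infDist_zero_of_mem (hMC hx)).trans_le hδ.le

theorem exists_hausdorffDist_closure_sUnion_lt {α : Type*} [MetricSpace α] {c : Set (Set α)}
    (hc : DirectedOn (· ⊆ ·) c) (hne : c.Nonempty) (hcpt : IsCompact (closure (⋃₀ c)))
    {ε : ℝ} (hε : 0 < ε) : ∃ s ∈ c, hausdorffDist s (closure (⋃₀ c)) < ε := by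
  have : Nonempty c := hne.to_subtype
  have hcover : closure (⋃₀ c) ⊆ ⋃ s : c, thickening (ε / 2) (s : Set α) := by
    intro x hx
    obtain ⟨y, ⟨t, ht, hyt⟩, hxy⟩ := Metric.mem_closure_iff.mp hx (ε / 2) (half_pos hε)
    exact mem_iUnion.mpr ⟨⟨t, ht⟩, mem_thickening_iff.mpr ⟨y, hyt, hxy⟩⟩
  obtain ⟨⟨s, hs⟩, hsub⟩ := hcpt.elim_directed_cover _ (fun _ => isOpen_thickening) hcover
    (hc.directed_val.mono_comp (· ⊆ ·) (g := thickening (ε / 2))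
      fun _ _ => thickening_subset_of_subset _)
  refine ⟨s, hs, (hausdorffDist_le_of_mem_dist (half_pos hε).le ?_ ?_).trans_lt
    (half_lt_self hε)⟩
  · exact fun x hx => ⟨x, subset_closure (mem_sUnion_of_mem hx hs), by simpa using (half_pos hε).le⟩
  · intro x hx
    obtain ⟨y, hy, hxy⟩ := mem_thickening_iff.mp (hsub hx)
    exact ⟨y, hy, hxy.le⟩

namespace Hyp

def mk (C : Set X) (hC : IsCompact C) (hC' : IsConnected C) : Hyp X :=
  ⟨⟨⟨C, hC⟩, hC'.nonempty⟩, hC'⟩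

theorem dist_eq (A B : Hyp X) : dist A B = hausdorffDist (A.1 : Set X) B.1 :=
  rfl

end Hyp

/-- The hyperspace `C(B)`. -/
def subcontinua (B : Set X) : Set (Hyp X) := {K | (K.1 : Set X) ⊆ B}

theorem subcontinua_mono {B B' : Set X} (h : B ⊆ B') : subcontinua B ⊆ subcontinua B' :=
  fun _ hK => hK.trans h

theorem self_mem_subcontinua (A : Hyp X) : A ∈ subcontinua (A.1 : Set X) :=
  Subset.rfl

theorem continuous_singHyp : Continuous (singHyp : X → Hyp X) :=
  NonemptyCompacts.continuous_singleton.subtype_mk _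

theorem singHyp_mem_subcontinua {x : X} {B : Set X} : singHyp x ∈ subcontinua B ↔ x ∈ B :=
  singleton_subset_iff

theorem exists_ssuperset_mk_mem {U : Set (Hyp X)} (hU : IsOpen U) {B M : Set X}
    (hB : IsCompact B) (hB' : IsPreconnected B) (hM : IsCompact M) (hM' : IsConnected M)
    (hMB : M ⊂ B) (hMU : Hyp.mk M hM hM' ∈ U) :
    ∃ (C : Set X) (hC : IsCompact C) (hC' : IsConnected C), M ⊂ C ∧ C ⊆ B ∧
      Hyp.mk C hC hC' ∈ U := by
  obtain ⟨b, hbB, hbM⟩ := exists_of_ssubset hMB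
  obtain ⟨ε, hε, hball⟩ := Metric.isOpen_iff.mp hU _ hMU
  have hbM' : 0 < infDist b M := (hM.isClosed.notMem_iff_infDist_pos hM'.nonempty).mp hbM
  obtain ⟨C, hC, hC', hMC, hCB, hCM⟩ :=
    exists_isPreconnected_ssuperset_hausdorffDist_le hB hB' hM'.2 hM'.nonempty hMB.1
      (lt_min (half_pos hε) (half_pos hbM'))
      ⟨b, hbB, (min_le_right _ _).trans_lt (half_lt_self hbM')⟩
  have hCconn : IsConnected C := ⟨hM'.nonempty.mono hMC.1, hC'⟩
  refine ⟨C, hC, hCconn, hMC, hCB, hball ?_⟩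
  rw [mem_ball, Hyp.dist_eq]
  exact hCM.trans_lt ((min_le_left _ _).trans_lt (half_lt_self hε))

/-- Zorn's lemma gives a maximal subcontinuum `M ∋ a` of `B` lying in `U` (chains are handled by
the relative closedness of `U` in `C(B)`); if `M ≠ B`, boundary bumping enlarges `M` inside `U`. -/
theorem mem_of_forall_singHyp_mem {B : Hyp X} {U V : Set (Hyp X)} (hU : IsOpen U)
    (hV : IsOpen V) (hcov : subcontinua B.1 ⊆ U ∪ V) (hdisj : subcontinua B.1 ∩ (U ∩ V) = ∅)
    (hsing : ∀ b ∈ (B.1 : Set X), singHyp b ∈ U) : B ∈ U := by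
  obtain ⟨a, ha⟩ := B.1.nonempty
  set F : Set (Set X) := {M | ∃ (hM : IsCompact M) (hM' : IsConnected M),
    a ∈ M ∧ M ⊆ (B.1 : Set X) ∧ Hyp.mk M hM hM' ∈ U}
  have mem_of_approx : ∀ M hM hM', M ⊆ (B.1 : Set X) →
      (∀ ε > 0, ∃ N ∈ F, hausdorffDist N M < ε) → Hyp.mk M hM hM' ∈ U := by
    intro M hM hM' hMB happrox
    refine (hcov hMB).resolve_right fun hMV => ?_
    obtain ⟨ε, hε, hball⟩ := Metric.isOpen_iff.mp hV _ hMV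
    obtain ⟨N, ⟨hN, hN', -, hNB, hNU⟩, hNM⟩ := happrox ε hε
    have hNV : Hyp.mk N hN hN' ∈ V := hball (by rwa [mem_ball, Hyp.dist_eq])
    exact (eq_empty_iff_forall_notMem.mp hdisj) _ ⟨hNB, hNU, hNV⟩
  have chain_bound : ∀ c ⊆ F, IsChain (· ⊆ ·) c → c.Nonempty → ∃ ub ∈ F, ∀ s ∈ c, s ⊆ ub := by
    intro c hcF hchain hcne
    obtain ⟨s₀, hs₀⟩ := hcne
    have hMB : closure (⋃₀ c) ⊆ (B.1 : Set X) :=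
      closure_minimal (sUnion_subset fun s hs => (hcF hs).2.2.2.1) B.1.isCompact.isClosed
    have hM : IsCompact (closure (⋃₀ c)) := B.1.isCompact.of_isClosed_subset isClosed_closure hMB
    have haM : a ∈ closure (⋃₀ c) := subset_closure (mem_sUnion_of_mem (hcF hs₀).2.2.1 hs₀)
    have hM' : IsConnected (closure (⋃₀ c)) := ⟨⟨a, haM⟩,
      (IsPreconnected.sUnion_directed hchain.directedOn fun s hs => (hcF hs).2.1.2).closure⟩
    refine ⟨_, ⟨hM, hM', haM, hMB, mem_of_approx _ hM hM' hMB fun ε hε => ?_⟩,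
      fun s hs => (subset_sUnion_of_mem hs).trans subset_closure⟩
    obtain ⟨s, hs, hsM⟩ :=
      exists_hausdorffDist_closure_sUnion_lt hchain.directedOn ⟨s₀, hs₀⟩ hM hε
    exact ⟨s, hcF hs, hsM⟩
  obtain ⟨M, -, hMmax⟩ := zorn_subset_nonempty F chain_bound {a}
    ⟨isCompact_singleton, isConnected_singleton, rfl, singleton_subset_iff.mpr ha, hsing a ha⟩
  obtain ⟨hM, hM', haM, hMB, hMU⟩ := hMmax.prop
  suffices hMeq : M = (B.1 : Set X) by
    convert hMU
    exact Subtype.ext (NonemptyCompacts.ext hMeq.symm)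
  by_contra hne
  obtain ⟨C, hC, hC', hMC, hCB, hCU⟩ :=
    exists_ssuperset_mk_mem hU B.1.isCompact B.2.2 hM hM' (hMB.ssubset_of_ne hne) hMU
  exact hMC.2 (hMmax.2 ⟨hC, hC', hMC.1 haM, hCB, hCU⟩ hMC.1)

theorem isPreconnected_subcontinua (B : Hyp X) : IsPreconnected (subcontinua (B.1 : Set X)) := by
  have hσ : singHyp '' (B.1 : Set X) ⊆ subcontinua B.1 := by
    rintro _ ⟨b, hb, rfl⟩
    exact singHyp_mem_subcontinua.mpr hb
  have key : ∀ U V : Set (Hyp X), IsOpen U → IsOpen V → subcontinua B.1 ⊆ U ∪ V →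
      subcontinua B.1 ∩ (U ∩ V) = ∅ → singHyp '' (B.1 : Set X) ⊆ U → subcontinua B.1 ⊆ U := by
    intro U V hU hV hcov hdisj hsing K hK
    exact mem_of_forall_singHyp_mem hU hV ((subcontinua_mono hK).trans hcov)
      (subset_empty_iff.mp ((inter_subset_inter_left _ (subcontinua_mono hK)).trans hdisj.le))
      fun b hb => hsing ⟨b, hK hb, rfl⟩
  rw [isPreconnected_iff_subset_of_disjoint]
  intro U V hU hV hcov hdisj
  rcases isPreconnected_iff_subset_of_disjoint.mp
      (B.2.isPreconnected.image _ continuous_singHyp.continuousOn) U V hU hV (hσ.trans hcov)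
      (subset_empty_iff.mp ((inter_subset_inter_left _ hσ).trans hdisj.le)) with h | h
  · exact Or.inl (key U V hU hV hcov hdisj h)
  · exact Or.inr (key V U hV hU (union_comm U V ▸ hcov) (inter_comm U V ▸ hdisj) h)

section CutPoint

variable (p : X)

theorem singHyp_mem_CpSet_iff {x : X} : singHyp x ∈ CpSet p ↔ p = x :=
  mem_singleton_iff

theorem subcontinua_subset_compl_CpSet {A : Hyp X} (hA : A ∈ (CpSet p)ᶜ) :
    subcontinua A.1 ⊆ (CpSet p)ᶜ :=
  fun _ hK hpK => hA (hK hpK)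

attribute [local instance] TopologicalSpace.vietoris in
theorem isPreconnected_of_isPreconnected_compl_CpSet
    (h : IsPreconnected ((CpSet p)ᶜ : Set (Hyp X))) : IsPreconnected ({p}ᶜ : Set X) := by
  have hunion : ({p}ᶜ : Set X) = ⋃ A ∈ (CpSet p)ᶜ, (A.1 : Set X) := by
    ext x
    simp only [mem_compl_iff, mem_singleton_iff, mem_iUnion, exists_prop]
    refine ⟨fun hx => ⟨singHyp x, fun h => hx ((singHyp_mem_CpSet_iff p).mp h).symm, rfl⟩, ?_⟩
    rintro ⟨A, hA, hxA⟩ rfl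
    exact hA hxA
  rw [hunion]
  rcases ((CpSet p)ᶜ : Set (Hyp X)).eq_empty_or_nonempty with hempty | ⟨A, hA⟩
  · simp only [hempty, mem_empty_iff_false, iUnion_of_empty, iUnion_empty, isPreconnected_empty]
  · exact vietoris.isPreconnected_biUnion h
      (NonemptyCompacts.continuous_coe.comp continuous_subtype_val).continuousOn
      ⟨A, hA, A.2.isPreconnected⟩

theorem isPreconnected_compl_CpSet_of_isPreconnected (h : IsPreconnected ({p}ᶜ : Set X)) :
    IsPreconnected ((CpSet p)ᶜ : Set (Hyp X)) := by
  set T := singHyp '' ({p}ᶜ : Set X)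
  have hT : T ⊆ (CpSet p)ᶜ := by
    rintro _ ⟨x, hx, rfl⟩ hpx
    exact hx ((singHyp_mem_CpSet_iff p).mp hpx).symm
  have hTconn : IsPreconnected T := h.image _ continuous_singHyp.continuousOn
  have hmemT : ∀ A ∈ (CpSet p)ᶜ, ∀ a ∈ (A.1 : Set X), singHyp a ∈ T := by
    rintro A hA a ha
    exact ⟨a, fun hap => hA (hap ▸ ha), rfl⟩
  have hlink : ∀ A ∈ (CpSet p)ᶜ, IsPreconnected (subcontinua A.1 ∪ T) := by
    intro A hA
    obtain ⟨a, ha⟩ := A.1.nonempty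
    exact (isPreconnected_subcontinua A).union'
      ⟨singHyp a, singHyp_mem_subcontinua.mpr ha, hmemT A hA a ha⟩ hTconn
  refine isPreconnected_of_forall_pair fun A hA A' hA' => ⟨_, ?_, ?_, ?_, (hlink A hA).union' ?_
    (hlink A' hA')⟩
  · exact union_subset (union_subset (subcontinua_subset_compl_CpSet p hA) hT)
      (union_subset (subcontinua_subset_compl_CpSet p hA') hT)
  · exact Or.inl (Or.inl (self_mem_subcontinua A))
  · exact Or.inr (Or.inl (self_mem_subcontinua A'))
  · obtain ⟨a, ha⟩ := A.1.nonempty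
    exact ⟨singHyp a, Or.inr (hmemT A hA a ha), Or.inr (hmemT A hA a ha)⟩

theorem isQuotientMap_hsMk : IsQuotientMap (hsMk p) :=
  isQuotientMap_quotient_mk'

theorem hsMk_eq_CpPoint_iff {A : Hyp X} : hsMk p A = CpPoint p ↔ A ∈ CpSet p := by
  refine ⟨fun h => ?_, fun h => Quotient.sound (Or.inr ⟨h, mem_singleton p⟩)⟩
  rcases Quotient.exact h with rfl | h
  exacts [mem_singleton p, h.1]

theorem preimage_hsMk_compl_CpPoint : hsMk p ⁻¹' {CpPoint p}ᶜ = (CpSet p)ᶜ := by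
  ext A
  exact not_congr (hsMk_eq_CpPoint_iff p)

theorem injOn_hsMk : InjOn (hsMk p) (CpSet p)ᶜ := by
  intro A hA B _ hAB
  exact ((Quotient.exact hAB : A = B ∨ _)).resolve_right fun h => hA h.1

theorem isClosed_CpSet : IsClosed (CpSet p) := by
  simpa only [CpSet, preimage_ofPred_eq, inter_singleton_nonempty] using
    (NonemptyCompacts.isClosed_inter_nonempty_of_isClosed (isClosed_singleton (x := p))).preimage
      continuous_subtype_val

theorem isOpen_compl_CpPoint : IsOpen ({CpPoint p}ᶜ : Set (HS p)) := by
  rw [← (isQuotientMap_hsMk p).isOpen_preimage, preimage_hsMk_compl_CpPoint]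
  exact (isClosed_CpSet p).isOpen_compl

end CutPoint

theorem stmt5_general (p : X) :
    ¬ IsPreconnected ({p}ᶜ : Set X) ↔ ¬ IsPreconnected ({CpPoint p}ᶜ : Set (HS p)) := by
  refine not_congr ?_
  rw [← (isQuotientMap_hsMk p).isPreconnected_preimage_iff (isOpen_compl_CpPoint p)
    ((preimage_hsMk_compl_CpPoint p).symm ▸ injOn_hsMk p), preimage_hsMk_compl_CpPoint]
  exact ⟨isPreconnected_compl_CpSet_of_isPreconnected p,
    isPreconnected_of_isPreconnected_compl_CpSet p⟩

theorem stmt5 [CompactSpace X] [ConnectedSpace X] [Nontrivial X] (p : X) :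
    ¬ IsPreconnected ({p}ᶜ : Set X) ↔ ¬ IsPreconnected ({CpPoint p}ᶜ : Set (HS p)) :=
  stmt5_general p
end

section
/- Let X be a continuum with the property of Kelley and suppose there exist distinct points p, q ∈ X such that HS(p,X) and HS(q,X) are locally connected. Then X is locally connected. -/
/-! Let `r ≠ x`. The continua missing `r` form an open saturated set on which the quotient map
`C(X) → HS(r,X)` is injective, so it is an open embedding there; hence `C(X)` is locally connected
at `{x}`. The union of the continua in a small connected neighbourhood of `{x}` is a small
connected neighbourhood of `x`, because a separation of the union would separate the family. With
two distinct points `p, q` every `x` differs from one of them. -/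

open TopologicalSpace Set

variable {X : Type*} [MetricSpace X]

open Topology

theorem IsOpen.exists_isPreconnected_mem_nhds_subset {Y : Type*} [TopologicalSpace Y] {U : Set Y}
    (hU : IsOpen U) [LocallyConnectedSpace U] {y : Y} (hy : y ∈ U) {N : Set Y} (hN : N ∈ 𝓝 y) :
    ∃ V ∈ 𝓝 y, IsPreconnected V ∧ V ⊆ N := by
  obtain ⟨V, hV, hVpre, hVN⟩ := locallyConnectedSpace_iff_connected_subsets.1 ‹_› ⟨y, hy⟩ _
    (continuous_subtype_val.continuousAt.preimage_mem_nhds hN)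
  exact ⟨_, hU.isOpenEmbedding_subtypeVal.image_mem_nhds.2 hV,
    hVpre.image _ continuous_subtype_val.continuousOn, image_subset_iff.2 hVN⟩

namespace Hyp

-- The Hausdorff metric on `NonemptyCompacts X` induces its Vietoris topology, definitionally.
theorem isOpen_setOf_subset {U : Set X} (hU : IsOpen U) :
    IsOpen {A : Hyp X | (A.1 : Set X) ⊆ U} :=
  (NonemptyCompacts.isOpen_subsets_of_isOpen hU).preimage continuous_subtype_val

theorem continuous_singHyp : Continuous (singHyp : X → Hyp X) :=
  NonemptyCompacts.continuous_singleton.subtype_mk _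

theorem biUnion_mem_nhds {x : X} {𝒱 : Set (Hyp X)} (h𝒱 : 𝒱 ∈ 𝓝 (singHyp x)) :
    ⋃ A ∈ 𝒱, (A.1 : Set X) ∈ 𝓝 x :=
  Filter.mem_of_superset (continuous_singHyp.continuousAt h𝒱)
    fun _ hy => mem_biUnion hy rfl

end Hyp

theorem IsPreconnected.biUnion_hyp {𝒱 : Set (Hyp X)} (h𝒱 : IsPreconnected 𝒱) :
    IsPreconnected (⋃ A ∈ 𝒱, (A.1 : Set X)) := by
  rw [isPreconnected_iff_subset_of_disjoint] at h𝒱 ⊢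
  intro u v hu hv hcover hdisj
  have hsub : ∀ A ∈ 𝒱, (A.1 : Set X) ⊆ ⋃ A ∈ 𝒱, (A.1 : Set X) := fun A hA =>
    subset_biUnion_of_mem (u := fun A : Hyp X => (A.1 : Set X)) hA
  have hsplit : ∀ A ∈ 𝒱, (A.1 : Set X) ⊆ u ∨ (A.1 : Set X) ⊆ v := fun A hA =>
    isPreconnected_iff_subset_of_disjoint.1 A.2.isPreconnected u v hu hv
      ((hsub A hA).trans hcover)
      (subset_empty_iff.1 (hdisj ▸ inter_subset_inter_left _ (hsub A hA)))
  have hnone : 𝒱 ∩ ({A | (A.1 : Set X) ⊆ u} ∩ {A | (A.1 : Set X) ⊆ v}) = ∅ := by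
    refine eq_empty_of_forall_notMem fun A ⟨hA, hAu, hAv⟩ => ?_
    obtain ⟨a, ha⟩ := A.1.nonempty
    exact (hdisj ▸ ⟨hsub A hA ha, hAu ha, hAv ha⟩ : a ∈ (∅ : Set X))
  rcases h𝒱 _ _ (Hyp.isOpen_setOf_subset hu) (Hyp.isOpen_setOf_subset hv) hsplit hnone with h | h
  · exact Or.inl (iUnion₂_subset h)
  · exact Or.inr (iUnion₂_subset h)

theorem isOpen_compl_cpSet (r : X) : IsOpen (CpSet r)ᶜ := by
  simpa only [compl_ofPred, CpSet, subset_compl_singleton_iff] using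
    Hyp.isOpen_setOf_subset (isOpen_compl_singleton (x := r))

theorem eq_of_hsMk_eq {r : X} {A B : Hyp X} (hA : A ∉ CpSet r) (h : hsMk r B = hsMk r A) :
    B = A :=
  (Quotient.exact h).resolve_right fun hBA => hA hBA.2

theorem isOpenEmbedding_domRestrict_hsMk (r : X) :
    IsOpenEmbedding ((CpSet r)ᶜ.domRestrict (hsMk r)) := by
  refine .of_continuous_injective_isOpenMap (continuous_quot_mk.comp continuous_subtype_val)
    (fun A B h => Subtype.ext (eq_of_hsMk_eq B.2 h)) fun 𝒮 h𝒮 => ?_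
  have hsaturated : hsMk r ⁻¹' ((CpSet r)ᶜ.domRestrict (hsMk r) '' 𝒮) = Subtype.val '' 𝒮 := by
    ext B
    constructor
    · rintro ⟨A, hA, hAB⟩
      exact ⟨A, hA, (eq_of_hsMk_eq A.2 hAB.symm).symm⟩
    · rintro ⟨A, hA, rfl⟩
      exact ⟨A, hA, rfl⟩
  rw [← isQuotientMap_quotient_mk'.isOpen_preimage]
  exact hsaturated ▸ (isOpen_compl_cpSet r).isOpenMap_subtype_val 𝒮 h𝒮

theorem exists_isPreconnected_mem_nhds_subset_of_ne {r x : X} [LocallyConnectedSpace (HS r)]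
    (hxr : x ≠ r) {U : Set X} (hU : U ∈ 𝓝 x) : ∃ V ∈ 𝓝 x, IsPreconnected V ∧ V ⊆ U := by
  have : LocallyConnectedSpace ((CpSet r)ᶜ : Set (Hyp X)) :=
    (isOpenEmbedding_domRestrict_hsMk r).locallyConnectedSpace
  have hx : singHyp x ∉ CpSet r := fun h => hxr (mem_singleton_iff.1 h).symm
  obtain ⟨𝒱, h𝒱, hpre, hsub⟩ := (isOpen_compl_cpSet r).exists_isPreconnected_mem_nhds_subset hx
    ((Hyp.isOpen_setOf_subset isOpen_interior).mem_nhds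
      (singleton_subset_iff.2 (mem_interior_iff_mem_nhds.2 hU)))
  exact ⟨_, Hyp.biUnion_mem_nhds h𝒱, hpre.biUnion_hyp,
    iUnion₂_subset fun A hA => (hsub hA).trans interior_subset⟩

theorem stmt16_general (p q : X) (hpq : p ≠ q)
    (hp : LocallyConnectedSpace (HS p)) (hq : LocallyConnectedSpace (HS q)) :
    LocallyConnectedSpace X := by
  refine locallyConnectedSpace_iff_connected_subsets.2 fun x U hU => ?_
  obtain ⟨r, _, hxr⟩ : ∃ r, LocallyConnectedSpace (HS r) ∧ x ≠ r := by
    by_cases hxp : x = p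
    · exact ⟨q, hq, hxp ▸ hpq⟩
    · exact ⟨p, hp, hxp⟩
  exact exists_isPreconnected_mem_nhds_subset_of_ne hxr hU

theorem stmt16 [CompactSpace X] [ConnectedSpace X] [Nontrivial X]
    (kelley : ∀ ε > (0:ℝ), ∃ δ > (0:ℝ), ∀ a b : X, dist a b < δ →
      ∀ A : Hyp X, a ∈ (A.1 : Set X) → ∃ B : Hyp X, b ∈ (B.1 : Set X) ∧ dist A B < ε)
    (p q : X) (hpq : p ≠ q)
    (hp : LocallyConnectedSpace (HS p)) (hq : LocallyConnectedSpace (HS q)) :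
    LocallyConnectedSpace X :=
  stmt16_general p q hpq hp hq
end
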